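/- arXiv:1409.3080 — 5 statements merged into one kernel-verified Lean document; each statement's English description precedes it below -/
import Mathlib

section
/- For all positive integers n and q, f(n,q) is at most the exponential tower of height n−1 with every entry equal to Q := 2q+1 (where the tower of height 0 equals 1, the tower of height 1 equals Q, the tower of height 2 equals Q^Q, etc.). In particular, f(n,q) is well-defined (finite) for all n and q. -/
/-- `W` is an instance of the pattern `V`: the image of `V` under a semigroup
homomorphism sending each letter to a nonempty word. -/
def IsInst {α β : Type} (V : List α) (W : List β) : Prop :=
  ∃ φ : α → List β, (∀ a ∈ V, φ a ≠ []) ∧ W = (V.map φ).flatten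

/-- `U` encounters `V`: some contiguous subword (infix) of `U` is an instance of `V`. -/
def Encounters {α β : Type} (U : List β) (V : List α) : Prop :=
  ∃ W : List β, W <:+: U ∧ IsInst V W

/-- `U` avoids `V`: `U` does not encounter `V`. -/
def Avoids {α β : Type} (U : List β) (V : List α) : Prop :=
  ¬ Encounters U V

/-- The Zimin words over the alphabet ℕ: `Z₀ = ε`, `Z_{n+1} = Zₙ · n · Zₙ`. -/
def Zimin : ℕ → List ℕ
  | 0 => []
  | n + 1 => Zimin n ++ n :: Zimin n

/-- `zimf n q` is the smallest `M` such that every `q`-ary word of length `M`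
encounters the Zimin word `Zₙ`. -/
noncomputable def zimf (n q : ℕ) : ℕ :=
  sInf {M : ℕ | ∀ W : List (Fin q), W.length = M → Encounters W (Zimin n)}

/-- `ZC n q M` is the set of `q`-ary words of length `M` that are instances of `Zₙ`. -/
def ZC (n q M : ℕ) : Set (List (Fin q)) :=
  {W | W.length = M ∧ IsInst (Zimin n) W}

/-- The exponential tower of height `k` with every entry `Q`:
`tower Q 0 = 1`, `tower Q (k+1) = Q ^ tower Q k`. -/
def tower (Q : ℕ) : ℕ → ℕ
  | 0 => 1
  | k + 1 => Q ^ tower Q k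

/-! ### Auxiliary lemmas -/

lemma zimin_lt {n : ℕ} : ∀ a ∈ Zimin n, a < n := by
  induction n with
  | zero => simp [Zimin]
  | succ n ih =>
    intro a ha
    simp only [Zimin, List.mem_append, List.mem_cons] at ha
    rcases ha with h | h | h
    · exact (ih a h).trans (Nat.lt_succ_self n)
    · omega
    · exact (ih a h).trans (Nat.lt_succ_self n)

lemma inst_extend {m : ℕ} {β : Type} {A C : List β} (hA : IsInst (Zimin m) A)
    (hC : C ≠ []) : IsInst (Zimin (m + 1)) (A ++ C ++ A) := by
  obtain ⟨φ, hφ, hAeq⟩ := hA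
  refine ⟨fun a => if a = m then C else φ a, ?_, ?_⟩
  · intro a ha
    simp only [Zimin, List.mem_append, List.mem_cons] at ha
    rcases ha with h | h | h
    · simpa [Nat.ne_of_lt (zimin_lt a h)] using hφ a h
    · simpa [h] using hC
    · simpa [Nat.ne_of_lt (zimin_lt a h)] using hφ a h
  · have hmap : (Zimin m).map (fun a => if a = m then C else φ a) = (Zimin m).map φ :=
      List.map_congr_left fun a ha => by simp [Nat.ne_of_lt (zimin_lt a ha)]
    show A ++ C ++ A = _
    rw [show Zimin (m + 1) = Zimin m ++ m :: Zimin m from rfl, List.map_append,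
      List.flatten_append, List.map_cons, List.flatten_cons, hmap, ← hAeq]
    simp

/-- list of fixed length as a vector -/
def toVec {q N : ℕ} (l : List (Fin q)) (h : l.length = N) : List.Vector (Fin q) N := ⟨l, h⟩

/-- segment of `W` starting at `p` of length `l` -/
def seg {β : Type} (W : List β) (p l : ℕ) : List β := (W.drop p).take l

lemma seg_infix {β : Type} (W : List β) (p l : ℕ) : seg W p l <:+: W :=
  (List.take_prefix l (W.drop p)).isInfix.trans (List.drop_suffix p W).isInfix

lemma seg_length {β : Type} (W : List β) {p l : ℕ} (h : p + l ≤ W.length) :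
    (seg W p l).length = l := by
  simp only [seg, List.length_take, List.length_drop]
  omega

lemma seg_add {β : Type} (W : List β) (p l1 l2 : ℕ) :
    seg W p (l1 + l2) = seg W p l1 ++ seg W (p + l1) l2 := by
  simp only [seg, List.take_add, List.drop_drop, Nat.add_comm p l1]

lemma seg_occ {β : Type} {W s A t : List β} {p N : ℕ}
    (hB : s ++ A ++ t = seg W p N) (hlen : p + N ≤ W.length)
    (hN : s.length + A.length + t.length = N) :
    seg W (p + s.length) A.length = A := by
  have h1 : seg W p N = seg W p (s.length + A.length) ++ seg W (p + (s.length + A.length)) t.length := by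
    rw [← seg_add]; congr 1; omega
  have h2 : seg W p (s.length + A.length) = seg W p s.length ++ seg W (p + s.length) A.length :=
    seg_add ..
  have hl1 : (seg W p (s.length + A.length)).length = s.length + A.length :=
    seg_length W (by omega)
  have hl2 : (seg W p s.length).length = s.length := seg_length W (by omega)
  have e1 : (s ++ A) ++ t = seg W p (s.length + A.length) ++ seg W (p + (s.length + A.length)) t.length := by
    rw [← h1, ← hB]
  have e2 : s ++ A = seg W p (s.length + A.length) :=
    (List.append_inj e1 (by simp [hl1])).1
  rw [h2] at e2
  exact (List.append_inj e2.symm (by simp [hl2])).2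

lemma enc_one {q : ℕ} {W : List (Fin q)} (h : W ≠ []) : Encounters W (Zimin 1) := by
  obtain ⟨w, W', rfl⟩ := List.exists_cons_of_ne_nil h
  exact ⟨[w], ⟨[], W', rfl⟩, fun _ => [w], by simp [Zimin], by simp [Zimin]⟩

lemma arith (q : ℕ) (hq : 1 ≤ q) : ∀ N, 1 ≤ N → (2 * q ^ N + 1) * N ≤ (2 * q + 1) ^ N := by
  intro N hN
  induction N with
  | zero => omega
  | succ N ih =>
    rcases Nat.eq_zero_or_pos N with rfl | hN1
    · simp
    · have h1 := ih hN1
      have h2 : 1 ≤ q ^ N := Nat.one_le_pow _ _ hq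
      calc (2 * q ^ (N + 1) + 1) * (N + 1)
          ≤ (2 * q + 1) * ((2 * q ^ N + 1) * N) := by
            rw [pow_succ]
            nlinarith [Nat.le_mul_of_pos_right (q * q ^ N) hN1, Nat.one_le_iff_ne_zero.mpr (Nat.mul_ne_zero (by omega) (by omega) : q * N ≠ 0)]
        _ ≤ (2 * q + 1) * (2 * q + 1) ^ N := Nat.mul_le_mul_left _ h1
        _ = (2 * q + 1) ^ (N + 1) := by rw [pow_succ]; ring

lemma tower_pos (Q k : ℕ) (hQ : 1 ≤ Q) : 1 ≤ tower Q k := by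
  induction k with
  | zero => simp [tower]
  | succ k ih => exact Nat.one_le_pow _ _ (by omega)

lemma step {q m : ℕ} {W : List (Fin q)} {N a b : ℕ} (hab : a + N < b)
    (hb : b + N ≤ W.length) (hseg : seg W a N = seg W b N)
    (hN : (seg W a N).length = N)
    (henc : Encounters (seg W a N) (Zimin m)) : Encounters W (Zimin (m + 1)) := by
  obtain ⟨A, ⟨s, t, hst⟩, hinst⟩ := henc
  have hlens : s.length + A.length + t.length = N := by
    have := congrArg List.length hst
    simp only [List.length_append] at this
    omega
  have ha : a + N ≤ W.length := by omega
  have occ1 : seg W (a + s.length) A.length = A := seg_occ hst ha hlens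
  have occ2 : seg W (b + s.length) A.length = A :=
    seg_occ (hst.trans hseg) hb hlens
  set p1 := a + s.length with hp1
  set p2 := b + s.length with hp2
  have hgap : p1 + A.length < p2 := by omega
  set mg := p2 - (p1 + A.length) with hmg
  set C := seg W (p1 + A.length) mg with hC
  have hCb : p1 + A.length + mg ≤ W.length := by omega
  have hClen : C.length = mg := seg_length W hCb
  have hCne : C ≠ [] := by
    intro hnil
    rw [hnil] at hClen
    simp at hClen
    omega
  have big : seg W p1 (A.length + (mg + A.length)) = A ++ (C ++ A) := by
    rw [seg_add, seg_add, occ1, ← hC]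
    congr 1
    rw [show p1 + A.length + mg = p2 by omega, occ2]
  refine ⟨A ++ C ++ A, ?_, inst_extend hinst hCne⟩
  rw [List.append_assoc, ← big]
  exact seg_infix ..

lemma key (q : ℕ) (hq : 0 < q) : ∀ k (W : List (Fin q)),
    tower (2 * q + 1) k ≤ W.length → Encounters W (Zimin (k + 1)) := by
  intro k
  induction k with
  | zero =>
    intro W hW
    refine enc_one ?_
    rintro rfl
    simp [tower] at hW
  | succ k ih =>
    intro W hW
    set N := tower (2 * q + 1) k with hNdef
    have hN1 : 1 ≤ N := tower_pos _ _ (by omega)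
    have hWlen : (2 * q ^ N + 1) * N ≤ W.length :=
      le_trans (arith q hq N hN1) (by simpa [tower] using hW)
    have hblen : ∀ i : Fin (q ^ N + 1), 2 * i.val * N + N ≤ W.length := by
      intro i
      have hi : i.val ≤ q ^ N := Nat.lt_succ_iff.mp i.isLt
      nlinarith
    obtain ⟨i, j, hne, heq⟩ := Fintype.exists_ne_map_eq_of_card_lt
      (fun i : Fin (q ^ N + 1) => toVec (seg W (2 * i.val * N) N) (seg_length W (hblen i)))
      (by simp [card_vector])
    have hseg : seg W (2 * i.val * N) N = seg W (2 * j.val * N) N :=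
      congrArg List.Vector.toList heq
    have hvne : i.val ≠ j.val := fun h => hne (Fin.ext h)
    have dostep : ∀ a b : Fin (q ^ N + 1), a.val < b.val →
        seg W (2 * a.val * N) N = seg W (2 * b.val * N) N →
        Encounters W (Zimin (k + 1 + 1)) := by
      intro a b hlt hs
      refine step (N := N) ?_ (hblen b) hs (seg_length W (hblen a)) ?_
      · nlinarith
      · exact ih _ (le_of_eq (seg_length W (hblen a)).symm)
    rcases Nat.lt_or_ge i.val j.val with h | h
    · exact dostep i j h hseg
    · exact dostep j i (by omega) hseg.symm

/-- For all positive integers `n` and `q`, every `q`-ary word of length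
`ᵏQ` (the tower of height `k = n - 1` of `Q = 2q+1`'s) encounters `Zₙ`;
in particular `f(n,q)` is well-defined and `f(n,q) ≤ ⁿ⁻¹(2q+1)`. -/
theorem zimf_le_tower (n q : ℕ) (hn : 0 < n) (hq : 0 < q) :
    (∀ W : List (Fin q), W.length = tower (2 * q + 1) (n - 1) →
      Encounters W (Zimin n)) ∧
    zimf n q ≤ tower (2 * q + 1) (n - 1) := by
  obtain ⟨m, rfl⟩ : ∃ m, n = m + 1 := ⟨n - 1, by omega⟩
  have h1 : ∀ W : List (Fin q), W.length = tower (2 * q + 1) (m + 1 - 1) →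
      Encounters W (Zimin (m + 1)) := by
    intro W hW
    exact key q hq m W (by simpa using hW.symm.le)
  exact ⟨h1, Nat.sInf_le h1⟩
end

section
/- For all positive integers n, M, and q ≥ 1, the number of q-ary Zimin instances grows at least geometrically in length: |C(n,q,M+1)| ≥ q · |C(n,q,M)|. -/
/-!
Write an instance `W` of `Z_{m+1}` as `W = B C B` with `B` an instance of `Z_m`, `C ≠ []`, and
`B` as short as possible. Inserting a letter `a` just before the final `B` gives the instance
`B (C a) B` of length `|W| + 1`, and this map `(a, W) ↦ B C a B` is injective: if
`B C a B = B' C' a' B'` with `|B| ≤ |B'|`, then `B` is both a prefix and a suffix of `B'`, so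
`W' = B' C' B'` also splits as `B D B`; minimality of `B'` forces `|B| = |B'|`, and then
everything else can be read off.
-/

namespace List

variable {β : Type*}

theorem exists_eq_append_append_of_prefix_of_suffix {B W : List β} (hpre : B <+: W)
    (hsuf : B <:+ W) (hlen : 2 * B.length < W.length) : ∃ D, D ≠ [] ∧ W = B ++ D ++ B := by
  obtain ⟨T, rfl⟩ := hpre
  rw [length_append] at hlen
  obtain ⟨D, rfl⟩ : B <:+ T :=
    suffix_of_suffix_length_le hsuf (suffix_append B T) (by omega)
  refine ⟨D, ?_, by rw [append_assoc]⟩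
  rintro rfl
  simp only [nil_append] at hlen
  omega

theorem prefix_and_suffix_of_append_append_eq {B B' X X' : List β}
    (h : B ++ X ++ B = B' ++ X' ++ B') (hle : B.length ≤ B'.length) : B <+: B' ∧ B <:+ B' := by
  constructor
  · refine prefix_of_prefix_length_le (l₃ := B' ++ X' ++ B') ?_
      (prefix_append_of_prefix (prefix_append B' X')) hle
    exact h ▸ prefix_append_of_prefix (prefix_append B X)
  · exact suffix_of_suffix_length_le (h ▸ suffix_append _ B) (suffix_append _ B') hle

end List

open List

theorem lt_of_mem_zimin {m a : ℕ} (ha : a ∈ Zimin m) : a < m := by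
  induction m with
  | zero => simp [Zimin] at ha
  | succ m ih =>
    simp only [Zimin, mem_append, mem_cons] at ha
    grind

variable {β : Type}

theorem isInst_zimin_succ_iff {m : ℕ} {W : List β} :
    IsInst (Zimin (m + 1)) W ↔
      ∃ B C : List β, IsInst (Zimin m) B ∧ C ≠ [] ∧ W = B ++ C ++ B := by
  constructor
  · rintro ⟨φ, hφ, rfl⟩
    refine ⟨((Zimin m).map φ).flatten, φ m, ⟨φ, fun a ha => hφ a (by simp [Zimin, ha]), rfl⟩,
      hφ m (by simp [Zimin]), by simp [Zimin]⟩
  · rintro ⟨B, C, ⟨ψ, hψ, rfl⟩, hC, rfl⟩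
    have hψ' : ((Zimin m).map fun a => if a = m then C else ψ a) = (Zimin m).map ψ :=
      map_congr_left fun a ha => if_neg (lt_of_mem_zimin ha).ne
    refine ⟨fun a => if a = m then C else ψ a, ?_, by simp [Zimin, hψ']⟩
    intro a ha
    dsimp only
    split_ifs with h
    · exact hC
    · exact hψ a (by simpa [Zimin, h] using ha)

def ziminBorderLengths (m : ℕ) (W : List β) : Set ℕ :=
  {k | ∃ B C : List β, B.length = k ∧ IsInst (Zimin m) B ∧ C ≠ [] ∧ W = B ++ C ++ B}

noncomputable def minZiminBorder (m : ℕ) (W : List β) : ℕ :=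
  sInf (ziminBorderLengths m W)

theorem minZiminBorder_mem {m : ℕ} {W : List β} (hW : IsInst (Zimin (m + 1)) W) :
    minZiminBorder m W ∈ ziminBorderLengths m W := by
  obtain ⟨B, C, hB, hC, rfl⟩ := isInst_zimin_succ_iff.1 hW
  exact Nat.sInf_mem ⟨B.length, B, C, rfl, hB, hC, rfl⟩

noncomputable def insertBeforeBorder (m : ℕ) (a : β) (W : List β) : List β :=
  W.take (W.length - minZiminBorder m W) ++ a :: W.drop (W.length - minZiminBorder m W)

theorem exists_insertBeforeBorder_eq {m : ℕ} {W : List β} (hW : IsInst (Zimin (m + 1)) W)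
    (a : β) : ∃ B C : List β, B.length = minZiminBorder m W ∧ IsInst (Zimin m) B ∧ C ≠ [] ∧
      W = B ++ C ++ B ∧ insertBeforeBorder m a W = B ++ C ++ a :: B := by
  obtain ⟨B, C, hBlen, hB, hC, hWeq⟩ := minZiminBorder_mem hW
  refine ⟨B, C, hBlen, hB, hC, hWeq, ?_⟩
  have hsplit : W.length - minZiminBorder m W = (B ++ C).length := by
    rw [← hBlen, hWeq, length_append]; omega
  rw [insertBeforeBorder, hsplit, hWeq, take_left' rfl, drop_left' rfl, append_assoc]

theorem isInst_insertBeforeBorder {m : ℕ} {W : List β} (hW : IsInst (Zimin (m + 1)) W)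
    (a : β) : IsInst (Zimin (m + 1)) (insertBeforeBorder m a W) := by
  obtain ⟨B, C, -, hB, -, -, heq⟩ := exists_insertBeforeBorder_eq hW a
  exact isInst_zimin_succ_iff.2 ⟨B, C ++ [a], hB, by simp, by simp [heq]⟩

theorem length_insertBeforeBorder {m : ℕ} {W : List β} (hW : IsInst (Zimin (m + 1)) W)
    (a : β) : (insertBeforeBorder m a W).length = W.length + 1 := by
  obtain ⟨B, C, -, -, -, hWeq, heq⟩ := exists_insertBeforeBorder_eq hW a
  rw [heq, hWeq]
  simp only [length_append, length_cons]
  omega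

theorem minZiminBorder_le_of_append_append_eq {m : ℕ} {B C B' C' : List β} {a a' : β}
    (h : B ++ C ++ a :: B = B' ++ C' ++ a' :: B') (hB : IsInst (Zimin m) B) (hC' : C' ≠ [])
    (hle : B.length ≤ B'.length) : minZiminBorder m (B' ++ C' ++ B') ≤ B.length := by
  obtain ⟨hpre, hsuf⟩ := prefix_and_suffix_of_append_append_eq (X := C ++ [a]) (X' := C' ++ [a'])
    (by simpa using h) hle
  have hC'len : 0 < C'.length := length_pos_iff.2 hC'
  obtain ⟨D, hD, hDeq⟩ := exists_eq_append_append_of_prefix_of_suffix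
    (hpre.trans (prefix_append_of_prefix (prefix_append B' C')))
    (hsuf.trans (suffix_append _ B')) (by simp only [length_append]; omega)
  exact Nat.sInf_le ⟨B, D, rfl, hB, hD, hDeq⟩

theorem insertBeforeBorder_injective {m : ℕ} {W W' : List β} {a a' : β}
    (hW : IsInst (Zimin (m + 1)) W) (hW' : IsInst (Zimin (m + 1)) W')
    (h : insertBeforeBorder m a W = insertBeforeBorder m a' W') : a = a' ∧ W = W' := by
  obtain ⟨B, C, hBlen, hB, hC, rfl, heq⟩ := exists_insertBeforeBorder_eq hW a
  obtain ⟨B', C', hBlen', hB', hC', rfl, heq'⟩ := exists_insertBeforeBorder_eq hW' a'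
  have hV : B ++ C ++ a :: B = B' ++ C' ++ a' :: B' := heq ▸ heq' ▸ h
  have hlen : B.length = B'.length := by
    rcases le_total B.length B'.length with hle | hle
    · have := minZiminBorder_le_of_append_append_eq hV hB hC' hle
      omega
    · have := minZiminBorder_le_of_append_append_eq hV.symm hB' hC hle
      omega
  obtain ⟨rfl, hrest⟩ := append_inj (by simpa using hV) hlen
  obtain ⟨rfl, hcons⟩ := append_inj hrest (by simpa using congrArg length hrest)
  exact ⟨(cons.inj hcons).1, rfl⟩

theorem ZC_card_succ_ge_general (n M q : ℕ) (hn : 0 < n) :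
    q * (ZC n q M).ncard ≤ (ZC n q (M + 1)).ncard := by
  obtain ⟨m, rfl⟩ : ∃ m, n = m + 1 := ⟨n - 1, by omega⟩
  have hfin : (ZC (m + 1) q (M + 1)).Finite :=
    (finite_length_eq (Fin q) (M + 1)).subset fun W hW => hW.1
  calc q * (ZC (m + 1) q M).ncard
      = ((Set.univ : Set (Fin q)) ×ˢ ZC (m + 1) q M).ncard := by simp [Set.ncard_prod]
    _ ≤ (ZC (m + 1) q (M + 1)).ncard := by
      refine Set.ncard_le_ncard_of_injOn (fun p => insertBeforeBorder m p.1 p.2) ?_ ?_ hfin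
      · rintro ⟨a, W⟩ ⟨-, hlen, hW⟩
        exact ⟨by rw [length_insertBeforeBorder hW, hlen], isInst_insertBeforeBorder hW a⟩
      · rintro ⟨a, W⟩ ⟨-, -, hW⟩ ⟨a', W'⟩ ⟨-, -, hW'⟩ h
        obtain ⟨rfl, rfl⟩ := insertBeforeBorder_injective hW hW' h
        rfl

/-- For all positive `n`, `M` and `q ≥ 1`, the number of `q`-ary Zimin instances grows
at least geometrically in length: `|C(n,q,M+1)| ≥ q · |C(n,q,M)|`. -/
theorem ZC_card_succ_ge (n M q : ℕ) (hn : 0 < n) (hM : 0 < M) (hq : 1 ≤ q) :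
    q * (ZC n q M).ncard ≤ (ZC n q (M + 1)).ncard :=
  ZC_card_succ_ge_general n M q hn
end

section
/- For all positive integers n, M and every integer q ≥ 2, |C(n,q,M)| ≤ (q/(q−1))^{n−1} · q^{M − 2ⁿ + n + 1}. Equivalently, the probability that a uniformly random q-ary word of length M is an instance of Zₙ is at most (q/(q−1))^{n−1} · q^{−2ⁿ + n + 1}. -/
lemma isInst_length_le {α β : Type} (V : List α) (W : List β) (h : IsInst V W) :
    V.length ≤ W.length := by
  obtain ⟨φ, hφ, rfl⟩ := h
  induction V with
  | nil => simp
  | cons a V ih =>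
    have h1 : (φ a).length ≠ 0 := fun h0 => hφ a (by simp) (List.length_eq_zero_iff.mp h0)
    have h2 := ih (fun b hb => hφ b (List.mem_cons_of_mem _ hb))
    simp only [List.map_cons, List.flatten_cons, List.length_append, List.length_cons]
    omega

lemma zimin_length (n : ℕ) : (Zimin n).length = 2 ^ n - 1 := by
  induction n with
  | zero => simp [Zimin]
  | succ n ih =>
    have : 1 ≤ 2 ^ n := Nat.one_le_two_pow
    simp only [Zimin, List.length_append, List.length_cons, ih, pow_succ]
    omega

lemma isInst_zimin_succ {β : Type} (n : ℕ) (W : List β) (h : IsInst (Zimin (n+1)) W) :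
    ∃ U B : List β, IsInst (Zimin n) U ∧ B ≠ [] ∧ W = U ++ B ++ U := by
  obtain ⟨φ, hφ, rfl⟩ := h
  refine ⟨((Zimin n).map φ).flatten, φ n,
    ⟨φ, fun a ha => hφ a (by simp [Zimin, ha]), rfl⟩, hφ n (by simp [Zimin]), ?_⟩
  simp [Zimin, List.map_append, List.flatten_append]

lemma ncard_length_eq (q M : ℕ) : {W : List (Fin q) | W.length = M}.ncard = q ^ M := by
  rw [← Nat.card_coe_set_eq]
  have e : {W : List (Fin q) | W.length = M} ≃ List.Vector (Fin q) M :=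
    ⟨fun w => ⟨w.1, w.2⟩, fun v => ⟨v.1, v.2⟩, fun _ => rfl, fun _ => rfl⟩
  rw [Nat.card_congr e, Nat.card_eq_fintype_card, card_vector, Fintype.card_fin]

lemma ZC_finite (n q M : ℕ) : (ZC n q M).Finite :=
  (List.finite_length_eq (Fin q) M).subset (fun _ hW => hW.1)

lemma ncard_biUnion_le' {α ι : Type*} (s : Finset ι) (t : ι → Set α) :
    (⋃ i ∈ s, t i).ncard ≤ ∑ i ∈ s, (t i).ncard := by
  classical
  induction s using Finset.induction with
  | empty => simp
  | @insert a s hx ih =>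
    rw [Finset.set_biUnion_insert, Finset.sum_insert hx]
    exact (Set.ncard_union_le _ _).trans (by omega)

lemma ncard_prod' {α β : Type} (s : Set α) (t : Set β) :
    (s ×ˢ t).ncard = s.ncard * t.ncard := by
  rw [← Nat.card_coe_set_eq, ← Nat.card_coe_set_eq, ← Nat.card_coe_set_eq,
    Nat.card_congr (Equiv.Set.prod s t), Nat.card_prod]

lemma count_step (n q M : ℕ) (hq : 1 ≤ q) :
    ((ZC (n+1) q M).ncard : ℝ) ≤
      ∑ k ∈ Finset.range M, ((ZC n q k).ncard : ℝ) * (q : ℝ) ^ ((M : ℤ) - 2 * k) := by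
  classical
  set T : ℕ → Set (List (Fin q)) := fun k => {B | B.length = M - 2*k ∧ 2*k < M} with hT
  set f : List (Fin q) × List (Fin q) → List (Fin q) := fun p => p.1 ++ p.2 ++ p.1 with hf
  have hTfin : ∀ k, (T k).Finite := fun k =>
    (List.finite_length_eq (Fin q) (M - 2*k)).subset (fun _ hB => hB.1)
  have hSfin : ∀ k, ((ZC n q k) ×ˢ (T k)).Finite := fun k => (ZC_finite n q k).prod (hTfin k)
  have hsub : ZC (n+1) q M ⊆ ⋃ k ∈ Finset.range M, f '' ((ZC n q k) ×ˢ (T k)) := by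
    rintro W ⟨hlen, hinst⟩
    obtain ⟨U, B, hU, hB, rfl⟩ := isInst_zimin_succ n W hinst
    have hBlen : 1 ≤ B.length := List.length_pos_iff.mpr hB
    have hWlen : U.length + (B.length + U.length) = M := by
      simpa using hlen
    have h2k : 2 * U.length < M := by omega
    refine Set.mem_iUnion₂.mpr ⟨U.length, Finset.mem_range.mpr (by omega), ?_⟩
    refine ⟨(U, B), ⟨⟨rfl, hU⟩, ?_, h2k⟩, rfl⟩
    show B.length = M - 2 * U.length
    omega
  have h1 : (ZC (n+1) q M).ncard ≤ ∑ k ∈ Finset.range M, ((ZC n q k) ×ˢ (T k)).ncard := by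
    refine le_trans (Set.ncard_le_ncard hsub ?_) ?_
    · exact Set.Finite.biUnion (Finset.range M).finite_toSet
        (fun k _ => (hSfin k).image f)
    · exact le_trans (ncard_biUnion_le' _ _)
        (Finset.sum_le_sum (fun k _ => Set.ncard_image_le (hSfin k)))
  have hq0 : (0:ℝ) < (q:ℝ) := by exact_mod_cast hq
  calc ((ZC (n+1) q M).ncard : ℝ)
      ≤ ∑ k ∈ Finset.range M, (((ZC n q k) ×ˢ (T k)).ncard : ℝ) := by
        exact_mod_cast h1
    _ ≤ ∑ k ∈ Finset.range M, ((ZC n q k).ncard : ℝ) * (q : ℝ) ^ ((M : ℤ) - 2 * k) := by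
        refine Finset.sum_le_sum (fun k _ => ?_)
        rw [ncard_prod']
        by_cases hk : 2*k < M
        · have hTcard : (T k).ncard ≤ q ^ (M - 2*k) := by
            rw [← ncard_length_eq q (M - 2*k)]
            exact Set.ncard_le_ncard (fun B hB => hB.1)
              (List.finite_length_eq (Fin q) (M - 2*k))
          have : ((M : ℤ) - 2 * k) = ((M - 2*k : ℕ) : ℤ) := by omega
          rw [this, zpow_natCast]
          push_cast
          exact mul_le_mul_of_nonneg_left (by exact_mod_cast hTcard) (by positivity)
        · have : T k = ∅ := by
            ext B; simp only [hT, Set.mem_setOf_eq, Set.mem_empty_iff_false, iff_false]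
            exact fun h => hk h.2
          rw [this, Set.ncard_empty, mul_zero]
          push_cast
          positivity

lemma geom_tail_le {r : ℝ} (h0 : 0 ≤ r) (h1 : r < 1) (K N : ℕ) :
    ∑ k ∈ Finset.Ico K N, r ^ k ≤ r ^ K * (1 - r)⁻¹ := by
  rw [Finset.sum_Ico_eq_sum_range]
  have heq : ∀ j, r ^ (K + j) = r ^ K * r ^ j := fun j => pow_add r K j
  simp only [heq, ← Finset.mul_sum]
  refine mul_le_mul_of_nonneg_left ?_ (by positivity)
  have hr1 : (0:ℝ) < 1 - r := by linarith
  calc ∑ j ∈ Finset.range (N - K), r ^ j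
      = (1 - r ^ (N - K)) / (1 - r) := by
        rw [geom_sum_eq h1.ne (N - K), ← neg_div_neg_eq]; ring_nf
    _ ≤ 1 / (1 - r) := by
        gcongr
        nlinarith [pow_nonneg h0 (N - K)]
    _ = (1 - r)⁻¹ := one_div _

lemma ZC_empty_of_short (n q M : ℕ) (h : M < 2 ^ n - 1) : ZC n q M = ∅ := by
  ext W
  simp only [ZC, Set.mem_setOf_eq, Set.mem_empty_iff_false, iff_false, not_and]
  intro hlen hinst
  have := isInst_length_le _ _ hinst
  rw [zimin_length, hlen] at this
  omega

lemma main_bound (q : ℕ) (hq : 2 ≤ q) :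
    ∀ n, 1 ≤ n → ∀ M, ((ZC n q M).ncard : ℝ) ≤
      ((q:ℝ)/((q:ℝ)-1)) ^ (n-1) * (q:ℝ) ^ ((M:ℤ) - 2^n + n + 1) := by
  have hq0 : (0:ℝ) < (q:ℝ) := by positivity
  have hq1 : (1:ℝ) < (q:ℝ) := by exact_mod_cast hq
  have hq1' : (0:ℝ) < (q:ℝ) - 1 := by linarith
  intro n hn
  induction n, hn using Nat.le_induction with
  | base =>
    intro M
    have h1 : (ZC 1 q M).ncard ≤ q ^ M := by
      rw [← ncard_length_eq q M]
      exact Set.ncard_le_ncard (fun W hW => hW.1) (List.finite_length_eq (Fin q) M)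
    simp only [Nat.sub_self, pow_zero, one_mul, Nat.cast_one, pow_one]
    have h2 : ((M:ℤ) - 2 + 1 + 1) = (M:ℤ) := by ring
    rw [h2, zpow_natCast]
    exact_mod_cast h1
  | succ n hn ih =>
    intro M
    set C : ℝ := ((q:ℝ)/((q:ℝ)-1)) ^ (n-1) with hC
    have hCpos : 0 < C := by positivity
    set K := 2 ^ n - 1 with hK
    have hKcast : (K : ℤ) = 2^n - 1 := by
      rw [hK, Nat.cast_sub Nat.one_le_two_pow]
      push_cast
      ring
    calc ((ZC (n+1) q M).ncard : ℝ)
        ≤ ∑ k ∈ Finset.range M, ((ZC n q k).ncard : ℝ) * (q : ℝ) ^ ((M : ℤ) - 2 * k) :=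
          count_step n q M (by omega)
      _ = ∑ k ∈ Finset.Ico K M, ((ZC n q k).ncard : ℝ) * (q : ℝ) ^ ((M : ℤ) - 2 * k) := by
          refine (Finset.sum_subset ?_ ?_).symm
          · intro k hk
            exact Finset.mem_range.mpr (Finset.mem_Ico.mp hk).2
          · intro k hkr hk
            have hkK : k < K := by
              have := Finset.mem_range.mp hkr
              simp only [Finset.mem_Ico, not_and, not_lt] at hk
              omega
            rw [ZC_empty_of_short n q k (by omega), Set.ncard_empty]
            simp
      _ ≤ ∑ k ∈ Finset.Ico K M,
            (C * (q:ℝ) ^ ((k:ℤ) - 2^n + n + 1)) * (q : ℝ) ^ ((M : ℤ) - 2 * k) := by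
          refine Finset.sum_le_sum (fun k _ => ?_)
          exact mul_le_mul_of_nonneg_right (ih k) (by positivity)
      _ = ∑ k ∈ Finset.Ico K M,
            C * (q:ℝ) ^ ((M:ℤ) - 2^n + n + 1) * ((q:ℝ)⁻¹) ^ k := by
          refine Finset.sum_congr rfl (fun k _ => ?_)
          have e4 : (k:ℤ) - 2^n + n + 1 + ((M:ℤ) - 2*k) = ((M:ℤ) - 2^n + n + 1) + (-(k:ℤ)) := by
            ring
          rw [mul_assoc, ← zpow_add₀ hq0.ne', e4, zpow_add₀ hq0.ne', inv_pow,
            ← zpow_natCast (q:ℝ) k, ← zpow_neg, mul_assoc]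
      _ = C * (q:ℝ) ^ ((M:ℤ) - 2^n + n + 1) * ∑ k ∈ Finset.Ico K M, ((q:ℝ)⁻¹) ^ k := by
          rw [Finset.mul_sum]
      _ ≤ C * (q:ℝ) ^ ((M:ℤ) - 2^n + n + 1) * (((q:ℝ)⁻¹) ^ K * (1 - (q:ℝ)⁻¹)⁻¹) := by
          refine mul_le_mul_of_nonneg_left (geom_tail_le (by positivity) ?_ K M) (by positivity)
          rw [inv_lt_one_iff₀]; right; exact hq1
      _ = ((q:ℝ)/((q:ℝ)-1)) ^ (n+1-1) * (q:ℝ) ^ ((M:ℤ) - 2^(n+1) + (n+1) + 1) := by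
          have e1 : (1 - (q:ℝ)⁻¹)⁻¹ = (q:ℝ)/((q:ℝ)-1) := by
            rw [inv_eq_iff_eq_inv]
            field_simp
          have e2 : ((q:ℝ)⁻¹) ^ K = (q:ℝ) ^ (-(K:ℤ)) := by
            rw [inv_pow, ← zpow_natCast (q:ℝ) K, ← zpow_neg]
          have e3 : (n+1-1) = (n-1) + 1 := by omega
          have e4 : ((M:ℤ) - 2^n + n + 1) + -((2:ℤ)^n - 1) = (M:ℤ) - 2^(n+1) + (↑(n+1):ℤ) + 1 := by
            push_cast; ring
          rw [e1, e2, hKcast, e3, pow_succ]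
          calc C * (q:ℝ)^((M:ℤ)-2^n+↑n+1) * ((q:ℝ)^(-((2:ℤ)^n-1)) * ((q:ℝ)/((q:ℝ)-1)))
              = (C * ((q:ℝ)/((q:ℝ)-1))) * ((q:ℝ)^((M:ℤ)-2^n+↑n+1) * (q:ℝ)^(-((2:ℤ)^n-1))) := by
                ring
            _ = (C * ((q:ℝ)/((q:ℝ)-1))) * (q:ℝ)^((M:ℤ) - 2^(n+1) + (↑(n+1):ℤ) + 1) := by
                rw [← zpow_add₀ hq0.ne', e4]

/-- For all positive `n`, `M` and `q ≥ 2`: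
`|C(n,q,M)| ≤ (q/(q−1))^{n−1} · q^{M − 2ⁿ + n + 1}`; equivalently, the probability that
a uniformly random `q`-ary word of length `M` is an instance of `Zₙ` is at most
`(q/(q−1))^{n−1} · q^{−2ⁿ + n + 1}`. -/
theorem ZC_card_upper (n M q : ℕ) (hn : 0 < n) (hM : 0 < M) (hq : 2 ≤ q) :
    ((ZC n q M).ncard : ℝ) ≤
      ((q : ℝ) / ((q : ℝ) - 1)) ^ (n - 1) * (q : ℝ) ^ ((M : ℤ) - 2 ^ n + n + 1) ∧
    ((ZC n q M).ncard : ℝ) / (q : ℝ) ^ M ≤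
      ((q : ℝ) / ((q : ℝ) - 1)) ^ (n - 1) * (q : ℝ) ^ (-(2 ^ n : ℤ) + n + 1) := by
  have hq0 : (0:ℝ) < (q:ℝ) := by positivity
  have h1 := main_bound q hq n hn M
  refine ⟨h1, ?_⟩
  rw [div_le_iff₀ (by positivity)]
  calc ((ZC n q M).ncard : ℝ) ≤ _ := h1
    _ = ((q : ℝ) / ((q : ℝ) - 1)) ^ (n - 1) * (q : ℝ) ^ (-(2 ^ n : ℤ) + n + 1) * (q:ℝ) ^ M := by
        rw [mul_assoc, ← zpow_natCast (q:ℝ) M, ← zpow_add₀ hq0.ne']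
        congr 1
        ring
end

section
/- Exactly 13 binary words (over the alphabet {0,1}) avoid Z₂ = aba, namely ε, 0, 00, 001, 0011, 01, 011, 1, 10, 100, 11, 110, and 1100. -/
lemma zimin_two : Zimin 2 = [0, 1, 0] := rfl

lemma enc_of {W : List (Fin 2)} {c : Fin 2} {M : List (Fin 2)} (hM : M ≠ [])
    (h : c :: (M ++ [c]) <:+: W) : Encounters W (Zimin 2) := by
  refine ⟨c :: (M ++ [c]), h, fun n => if n = 1 then M else [c], ?_, ?_⟩
  · intro a _ hc
    rcases eq_or_ne a 1 with h1 | h1 <;> simp [h1] at hc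
    exact hM hc
  · simp [zimin_two]

lemma exists_rep (L M R : List (Fin 2)) (c : Fin 2) (hM : M ≠ []) :
    ∃ i j : Fin (L ++ c :: (M ++ c :: R)).length,
      (i : ℕ) + 2 ≤ (j : ℕ) ∧ (L ++ c :: (M ++ c :: R)).get i = (L ++ c :: (M ++ c :: R)).get j := by
  have hlen : (L ++ c :: (M ++ c :: R)).length = L.length + M.length + R.length + 2 := by
    simp [List.length_append]; omega
  have hM0 : 0 < M.length := List.length_pos_iff.mpr hM
  refine ⟨⟨L.length, by omega⟩, ⟨L.length + (M.length + 1), by omega⟩, by simp; omega, ?_⟩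
  simp only [List.get_eq_getElem]
  rw [List.getElem_append_right (le_refl L.length), List.getElem_append_right (by omega)]
  simp [List.getElem_append_right]

lemma enc_to {W : List (Fin 2)} (h : Encounters W (Zimin 2)) :
    ∃ i j : Fin W.length, (i : ℕ) + 2 ≤ (j : ℕ) ∧ W.get i = W.get j := by
  obtain ⟨W', hinf, φ, hφ, hW'⟩ := h
  rw [zimin_two] at hφ hW'
  obtain ⟨L, R, hLR⟩ := hinf
  have hA : φ 0 ≠ [] := hφ 0 (by simp)
  obtain ⟨c, A', hA'⟩ := List.exists_cons_of_ne_nil hA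
  have hW : W = L ++ c :: ((A' ++ φ 1) ++ c :: (A' ++ R)) := by
    rw [← hLR, hW']; simp [hA']
  rw [hW]
  exact exists_rep L (A' ++ φ 1) (A' ++ R) c (by simp [hφ 1 (by simp)])


/-- Exactly 13 binary words avoid `Z₂ = aba`, namely
`ε, 0, 00, 001, 0011, 01, 011, 1, 10, 100, 11, 110, 1100`. -/
theorem avoid_Z2_words :
    {W : List (Fin 2) | Avoids W (Zimin 2)} =
      ({[], [0], [0, 0], [0, 0, 1], [0, 0, 1, 1], [0, 1], [0, 1, 1],
        [1], [1, 0], [1, 0, 0], [1, 1], [1, 1, 0], [1, 1, 0, 0]} :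
        Set (List (Fin 2))) ∧
    {W : List (Fin 2) | Avoids W (Zimin 2)}.ncard = 13 := by
  have hset : {W : List (Fin 2) | Avoids W (Zimin 2)} =
      ({[], [0], [0, 0], [0, 0, 1], [0, 0, 1, 1], [0, 1], [0, 1, 1],
        [1], [1, 0], [1, 0, 0], [1, 1], [1, 1, 0], [1, 1, 0, 0]} :
        Set (List (Fin 2))) := by
    ext W
    simp only [Set.mem_setOf_eq, Set.mem_insert_iff, Set.mem_singleton_iff]
    constructor
    · intro hav
      match W with
      | [] => tauto
      | [a] => fin_cases a <;> decide
      | [a, b] => fin_cases a <;> fin_cases b <;> decide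
      | [a, b, c] =>
        have hac : a ≠ c := by
          intro h; subst h
          exact hav (enc_of (c := a) (M := [b]) (by simp) (List.infix_refl _))
        revert hac; fin_cases a <;> fin_cases b <;> fin_cases c <;> decide
      | [a, b, c, d] =>
        have hac : a ≠ c := by
          intro h; subst h
          exact hav (enc_of (c := a) (M := [b]) (by simp) ⟨[], [d], rfl⟩)
        have hbd : b ≠ d := by
          intro h; subst h
          exact hav (enc_of (c := b) (M := [c]) (by simp) ⟨[a], [], rfl⟩)
        have had : a ≠ d := by
          intro h; subst h
          exact hav (enc_of (c := a) (M := [b, c]) (by simp) ⟨[], [], rfl⟩)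
        revert hac hbd had
        fin_cases a <;> fin_cases b <;> fin_cases c <;> fin_cases d <;> decide
      | a :: b :: c :: d :: e :: t =>
        exfalso
        have hac : a ≠ c := by
          intro h; subst h
          exact hav (enc_of (c := a) (M := [b]) (by simp) ⟨[], d :: e :: t, rfl⟩)
        have hce : c ≠ e := by
          intro h; subst h
          exact hav (enc_of (c := c) (M := [d]) (by simp) ⟨[a, b], t, rfl⟩)
        have hae : a ≠ e := by
          intro h; subst h
          exact hav (enc_of (c := a) (M := [b, c, d]) (by simp) ⟨[], t, rfl⟩)
        have : a = c ∨ c = e ∨ a = e := by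
          fin_cases a <;> fin_cases c <;> fin_cases e <;> tauto
        tauto
    · intro h
      rcases h with rfl | rfl | rfl | rfl | rfl | rfl | rfl | rfl | rfl | rfl | rfl | rfl | rfl <;>
        exact fun henc => absurd (enc_to henc) (by decide)
  refine ⟨hset, ?_⟩
  rw [hset]
  have hfin : ({[], [0], [0, 0], [0, 0, 1], [0, 0, 1, 1], [0, 1], [0, 1, 1],
        [1], [1, 0], [1, 0, 0], [1, 1], [1, 1, 0], [1, 1, 0, 0]} :
        Set (List (Fin 2))) =
      ↑({[], [0], [0, 0], [0, 0, 1], [0, 0, 1, 1], [0, 1], [0, 1, 1],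
        [1], [1, 0], [1, 0, 0], [1, 1], [1, 1, 0], [1, 1, 0, 0]} :
        Finset (List (Fin 2))) := by simp
  rw [hfin, Set.ncard_coe_finset]
  decide
end

section
/- For every positive integer n, the Zimin word Zₙ is unavoidable: for every positive integer q, the set of q-ary words that avoid Zₙ is finite. -/
lemma mem_zimin_lt : ∀ n, ∀ a ∈ Zimin n, a < n := by
  intro n
  induction n with
  | zero => simp [Zimin]
  | succ n ih =>
    intro a ha
    simp only [Zimin, List.mem_append, List.mem_cons] at ha
    rcases ha with h | h | h
    · exact (ih a h).trans (Nat.lt_succ_self n)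
    · omega
    · exact (ih a h).trans (Nat.lt_succ_self n)

lemma isInst_succ {β : Type} (n : ℕ) (X g : List β) (hg : g ≠ [])
    (h : IsInst (Zimin n) X) : IsInst (Zimin (n+1)) (X ++ g ++ X) := by
  obtain ⟨φ, hφ, hX⟩ := h
  refine ⟨fun a => if a = n then g else φ a, ?_, ?_⟩
  · intro a ha
    simp only [Zimin, List.mem_append, List.mem_cons] at ha
    by_cases hne : a = n
    · simpa [hne] using hg
    · have : a ∈ Zimin n := by rcases ha with h | h | h <;> [exact h; exact absurd h hne; exact h]
      simpa [hne] using hφ a this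
  · have hmap : (Zimin n).map (fun a => if a = n then g else φ a) = (Zimin n).map φ :=
      List.map_congr_left fun a ha => by simp [Nat.ne_of_lt (mem_zimin_lt n a ha)]
    simp [Zimin, List.map_append, List.flatten_append, hmap, ← hX, List.append_assoc]

lemma occ_of_infix_drop_take {β : Type} (W X : List β) (a m : ℕ)
    (h : X <:+: (W.drop a).take m) :
    ∃ p, a ≤ p ∧ p + X.length ≤ a + m ∧ X <+: W.drop p := by
  obtain ⟨s, t, hst⟩ := h
  refine ⟨a + s.length, Nat.le_add_right _ _, ?_, ?_⟩
  · have := congrArg List.length hst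
    simp only [List.length_append, List.length_take, List.length_drop] at this
    omega
  · have h1 : (s ++ X) <+: (W.drop a).take m := ⟨t, by simpa [List.append_assoc] using hst⟩
    have h2 : (s ++ X) <+: W.drop a := List.IsPrefix.trans h1 (List.take_prefix m _)
    obtain ⟨r, hr⟩ := h2
    refine ⟨r, ?_⟩
    have := congrArg (List.drop s.length) hr
    rwa [List.drop_drop, List.append_assoc, List.drop_left] at this

lemma infix_of_two_occ {β : Type} (W X : List β) (p p' : ℕ)
    (h1 : X <+: W.drop p) (h2 : X <+: W.drop p')
    (hlt : p + X.length < p') (hp' : p' < W.length) :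
    ∃ g, g ≠ [] ∧ (X ++ g ++ X) <:+: W := by
  obtain ⟨r, hr⟩ := h1
  obtain ⟨r', hr'⟩ := h2
  set g := (W.drop (p + X.length)).take (p' - (p + X.length)) with hg
  have hr2 : W.drop (p + X.length) = r := by
    have := congrArg (List.drop X.length) hr
    rw [List.drop_left, List.drop_drop] at this
    exact this.symm
  have hsplit : g ++ W.drop p' = W.drop (p + X.length) := by
    have := List.drop_take_append_drop W (p + X.length) (p' - (p + X.length))
    rwa [show p + X.length + (p' - (p + X.length)) = p' by omega] at this
  refine ⟨g, ?_, ?_⟩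
  · have : g.length ≠ 0 := by
      simp only [hg, List.length_take, List.length_drop]
      omega
    exact fun hnil => this (by simp [hnil])
  · refine ⟨W.take p, r', ?_⟩
    have : W.drop p = X ++ g ++ X ++ r' := by
      rw [← hr, ← hr2, ← hsplit, ← hr']
      simp [List.append_assoc]
    calc W.take p ++ (X ++ g ++ X) ++ r' = W.take p ++ W.drop p := by
          rw [this]; simp [List.append_assoc]
      _ = W := List.take_append_drop _ _

lemma zimin_key (q : ℕ) : ∀ n : ℕ, ∃ L : ℕ, ∀ W : List (Fin q),
    L ≤ W.length → Encounters W (Zimin n) := by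
  intro n
  induction n with
  | zero =>
    refine ⟨0, fun W _ => ⟨[], ⟨[], W, by simp⟩, fun _ => [], ?_, by simp [Zimin]⟩⟩
    intro a ha
    simp [Zimin] at ha
  | succ n ih =>
    obtain ⟨L, hL⟩ := ih
    have hfin : {l : List (Fin q) | l.length ≤ L}.Finite := List.finite_length_le _ L
    set S := hfin.toFinset with hS
    set K := S.card + 1 with hK
    refine ⟨K * (L + 1), fun W hW => ?_⟩
    have hlen : ∀ k : Fin K, (k : ℕ) * (L + 1) + (L + 1) ≤ W.length := by
      intro k
      calc (k : ℕ) * (L + 1) + (L + 1) = ((k : ℕ) + 1) * (L + 1) := by ring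
        _ ≤ K * (L + 1) := Nat.mul_le_mul_right _ k.2
        _ ≤ W.length := hW
    set B : Fin K → List (Fin q) := fun k => (W.drop ((k : ℕ) * (L+1))).take L with hB
    have hBlen : ∀ k : Fin K, (B k).length = L := by
      intro k
      have := hlen k
      simp only [hB, List.length_take, List.length_drop]
      omega
    have hI : ∀ k : Fin K, ∃ I, I <:+: B k ∧ IsInst (Zimin n) I := by
      intro k
      exact hL (B k) (by rw [hBlen])
    choose I hI1 hI2 using hI
    have hmaps : ∀ k ∈ (Finset.univ : Finset (Fin K)), I k ∈ S := by
      intro k _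
      rw [hS, Set.Finite.mem_toFinset]
      show (I k).length ≤ L
      calc (I k).length ≤ (B k).length := (hI1 k).length_le
        _ = L := hBlen k
    have hcard : S.card < (Finset.univ : Finset (Fin K)).card := by
      simp [hK]
    obtain ⟨i, _, j, _, hij, hIij⟩ :=
      Finset.exists_ne_map_eq_of_card_lt_of_maps_to hcard hmaps
    have main : ∀ i j : Fin K, (i : ℕ) < (j : ℕ) → I i = I j →
        Encounters W (Zimin (n+1)) := by
      intro i j hlt hIeq
      obtain ⟨p, hp1, hp2, hp3⟩ :=
        occ_of_infix_drop_take W (I i) ((i : ℕ) * (L+1)) L (hI1 i)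
      obtain ⟨p', hq1, hq2, hq3⟩ :=
        occ_of_infix_drop_take W (I j) ((j : ℕ) * (L+1)) L (hI1 j)
      rw [← hIeq] at hq3 hq2
      have hgap : p + (I i).length < p' := by
        have h1 : (i : ℕ) * (L + 1) + (L + 1) ≤ (j : ℕ) * (L + 1) := by
          calc (i : ℕ) * (L + 1) + (L + 1) = ((i : ℕ) + 1) * (L + 1) := by ring
            _ ≤ (j : ℕ) * (L + 1) := Nat.mul_le_mul_right _ hlt
        omega
      have hp'W : p' < W.length := by
        have h2 := hlen j
        omega
      obtain ⟨g, hg, hinf⟩ := infix_of_two_occ W (I i) p p' hp3 hq3 hgap hp'W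
      exact ⟨I i ++ g ++ I i, hinf, isInst_succ n (I i) g hg (hI2 i)⟩
    rcases Nat.lt_or_ge (i : ℕ) (j : ℕ) with h | h
    · exact main i j h hIij
    · have : (j : ℕ) < (i : ℕ) := by
        rcases Nat.lt_or_ge (j : ℕ) (i : ℕ) with h' | h'
        · exact h'
        · exact absurd (Fin.ext (Nat.le_antisymm h' h)) hij
      exact main j i this hIij.symm

/-- For every positive `n`, the Zimin word `Zₙ` is unavoidable: for every positive `q`,
the set of `q`-ary words that avoid `Zₙ` is finite. -/
theorem zimin_unavoidable (n : ℕ) (hn : 0 < n) (q : ℕ) (hq : 0 < q) :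
    {W : List (Fin q) | Avoids W (Zimin n)}.Finite := by
  obtain ⟨L, hL⟩ := zimin_key q n
  apply (List.finite_length_lt (Fin q) L).subset
  intro W hW
  show W.length < L
  by_contra h
  exact hW (hL W (Nat.le_of_not_lt h))
end
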